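/- There is no real-valued scoring rule S for binary outcomes with S(·,0) and S(·,1) continuous on [0,1] such that the Tjur-R²-like evaluation Ev_S(a,b,c,d) equals the Youden index Youden(a,b,c,d) for every quadruple of natural numbers (a,b,c,d) with a + c ≠ 0 and b + d ≠ 0. -/
import Mathlib


/-- The Youden index of a 2×2 contingency table `(a,b,c,d)` (real arithmetic,
with the convention `x/0 = 0`). -/
noncomputable def Youden (a b c d : ℕ) : ℝ :=
  (a : ℝ) / ((a : ℝ) + (c : ℝ)) + (d : ℝ) / ((b : ℝ) + (d : ℝ)) - 1

/-- The Tjur-R²-like evaluation of the scoring rule `S : ℝ → Fin 2 → ℝ` on the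
table `(a,b,c,d)`, with predicted probabilities `p₁ = a/(a+b)` and
`p₀ = c/(c+d)` (convention `0/0 = 0`). -/
noncomputable def Ev (S : ℝ → Fin 2 → ℝ) (a b c d : ℕ) : ℝ :=
  (1 / ((a : ℝ) + c)) *
    ((a : ℝ) * S ((a : ℝ) / ((a : ℝ) + (b : ℝ))) 1
      + (c : ℝ) * S ((c : ℝ) / ((c : ℝ) + (d : ℝ))) 0)
  - (1 / ((b : ℝ) + d)) *
    ((b : ℝ) * S ((a : ℝ) / ((a : ℝ) + (b : ℝ))) 0
      + (d : ℝ) * S ((c : ℝ) / ((c : ℝ) + (d : ℝ))) 1)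

/-- There is no scoring rule `S` with `S(·,0)` and `S(·,1)` continuous on `[0,1]`
whose Tjur-R²-like evaluation equals the Youden index for every table
`(a,b,c,d)` with `a + c ≠ 0` and `b + d ≠ 0`. -/
theorem no_continuous_scoring_rule_ev_equals_youden :
    ¬ ∃ S : ℝ → Fin 2 → ℝ,
      ContinuousOn (fun p => S p 0) (Set.Icc (0 : ℝ) 1) ∧
      ContinuousOn (fun p => S p 1) (Set.Icc (0 : ℝ) 1) ∧
      ∀ a b c d : ℕ, a + c ≠ 0 → b + d ≠ 0 →
        Ev S a b c d = Youden a b c d := by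
  rintro ⟨S, -, -, h⟩
  have h1 := h 1 2 0 0 (by norm_num) (by norm_num)
  have h2 := h 2 1 0 0 (by norm_num) (by norm_num)
  have h3 := h 1 1 0 0 (by norm_num) (by norm_num)
  have h4 := h 1 1 1 2 (by norm_num) (by norm_num)
  have h5 := h 1 1 2 1 (by norm_num) (by norm_num)
  have h6 := h 1 2 2 1 (by norm_num) (by norm_num)
  simp only [Ev, Youden, Nat.cast_one, Nat.cast_two, Nat.cast_zero,
    Nat.cast_ofNat] at h1 h2 h3 h4 h5 h6
  norm_num at h1 h2 h3 h4 h5 h6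
  linarith
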